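/- Let Λ be a finite-dimensional algebra and M a Λ-module. If X ↣ Y ↠ Z is a conflation in K^{[-1,0]}(proj Λ) with X and Y both M-semistable, then Z is M-semistable (closure under cones). Dually, if Y and Z are M-semistable then X is M-semistable (closure under cocones). -/

import Mathlib

/-!
Applying `Hom_Λ(-, M)` to the conflation gives a map from the short exact sequence
`0 → Hom(Z⁰, M) → Hom(Y⁰, M) → Hom(X⁰, M) → 0` to the corresponding sequence in degree `-1`,
whose components are the maps defining `M`-semistability. The rows are exact: `Hom_Λ(-, M)` is
left exact, and surjective on the right because the degreewise sequences split, `Z⁰` and `Z⁻¹`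
being projective. Two of the three vertical maps
being bijective then forces the third to be, by the four lemmas for additive groups.
-/

namespace LinearMap

variable {R A B C : Type*} (M : Type*) [Ring R]
  [AddCommGroup A] [Module R A] [AddCommGroup B] [Module R B]
  [AddCommGroup C] [Module R C] [AddCommGroup M] [Module R M]

-- Over a noncommutative ring `Hom(B, M)` is only an additive group, hence not `LinearMap.lcomp`.
def precomp (f : A →ₗ[R] B) : (B →ₗ[R] M) →+ (A →ₗ[R] M) where
  toFun φ := φ.comp f
  map_zero' := zero_comp f
  map_add' φ ψ := add_comp f ψ φ

@[simp]
lemma precomp_apply (f : A →ₗ[R] B) (φ : B →ₗ[R] M) : precomp M f φ = φ.comp f := rfl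

variable {M}

lemma precomp_comp_precomp_of_comp_eq {A' : Type*} [AddCommGroup A'] [Module R A']
    {f : A →ₗ[R] B} {g : B →ₗ[R] C} {f' : A →ₗ[R] A'} {g' : A' →ₗ[R] C}
    (h : g.comp f = g'.comp f') :
    (precomp M f).comp (precomp M g) = (precomp M f').comp (precomp M g') := by
  ext φ : 1
  simp only [AddMonoidHom.comp_apply, precomp_apply, comp_assoc, h]

lemma precomp_injective_of_surjective {g : B →ₗ[R] C} (hg : Function.Surjective g) :
    Function.Injective (precomp M g) :=
  hg.injective_linearMapComp_right

lemma exact_precomp_of_exact_of_surjective {f : A →ₗ[R] B} {g : B →ₗ[R] C}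
    (hfg : Function.Exact f g) (hg : Function.Surjective g) :
    Function.Exact (precomp M g) (precomp M f) := by
  intro φ
  refine ⟨fun hφ ↦ ?_, ?_⟩
  · refine ⟨(range f).liftQ φ (range_le_ker_iff.mpr hφ) ∘ₗ
      (hfg.linearEquivOfSurjective hg).symm.toLinearMap, ?_⟩
    ext b
    simp
  · rintro ⟨ψ, rfl⟩
    simp only [precomp_apply, comp_assoc, hfg.linearMap_comp_eq_zero, comp_zero]

lemma precomp_surjective_of_exact_of_injective [Module.Projective R C]
    {f : A →ₗ[R] B} {g : B →ₗ[R] C} (hfg : Function.Exact f g)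
    (hf : Function.Injective f) (hg : Function.Surjective g) :
    Function.Surjective (precomp M f) := by
  obtain ⟨s, hs⟩ := Module.projective_lifting_property g id hg
  have splitting : (∃ s : C →ₗ[R] B, g ∘ₗ s = id) ↔ ∃ r : B →ₗ[R] A, r ∘ₗ f = id :=
    (hfg.split_tfae hf hg).out 0 1
  obtain ⟨r, hr⟩ := splitting.mp ⟨s, hs⟩
  exact fun ψ ↦ ⟨ψ.comp r, by rw [precomp_apply, comp_assoc, hr, comp_id]⟩

end LinearMap

open LinearMap in
theorem stmt3 {Λ : Type*} [Ring Λ]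
    {M : Type*} [AddCommGroup M] [Module Λ M]
    {Xm X0 Ym Y0 Zm Z0 : Type*}
    [AddCommGroup Xm] [Module Λ Xm]
    [AddCommGroup X0] [Module Λ X0]
    [AddCommGroup Ym] [Module Λ Ym]
    [AddCommGroup Y0] [Module Λ Y0]
    [AddCommGroup Zm] [Module Λ Zm] [Module.Projective Λ Zm]
    [AddCommGroup Z0] [Module Λ Z0] [Module.Projective Λ Z0]
    (dx : Xm →ₗ[Λ] X0) (dy : Ym →ₗ[Λ] Y0) (dz : Zm →ₗ[Λ] Z0)
    -- the conflation `X ↣ Y ↠ Z`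
    (fm : Xm →ₗ[Λ] Ym) (f0 : X0 →ₗ[Λ] Y0) (gm : Ym →ₗ[Λ] Zm) (g0 : Y0 →ₗ[Λ] Z0)
    (hf : f0.comp dx = dy.comp fm) (hg : g0.comp dy = dz.comp gm)
    (hmono_m : Function.Injective fm) (hexact_m : Function.Exact fm gm)
    (hepi_m : Function.Surjective gm)
    (hmono_0 : Function.Injective f0) (hexact_0 : Function.Exact f0 g0)
    (hepi_0 : Function.Surjective g0)
 :
    -- closure under cones: if `X` and `Y` are `M`-semistable then so is `Z`
    (((Function.Bijective fun φ : X0 →ₗ[Λ] M => φ.comp dx) ∧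
        (Function.Bijective fun φ : Y0 →ₗ[Λ] M => φ.comp dy)) →
      (Function.Bijective fun φ : Z0 →ₗ[Λ] M => φ.comp dz)) ∧
    -- closure under cocones: if `Y` and `Z` are `M`-semistable then so is `X`
    (((Function.Bijective fun φ : Y0 →ₗ[Λ] M => φ.comp dy) ∧
        (Function.Bijective fun φ : Z0 →ₗ[Λ] M => φ.comp dz)) →
      (Function.Bijective fun φ : X0 →ₗ[Λ] M => φ.comp dx)) := by
  have comm_g := precomp_comp_precomp_of_comp_eq (M := M) hg.symm
  have comm_f := precomp_comp_precomp_of_comp_eq (M := M) hf.symm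
  have exact_0 := exact_precomp_of_exact_of_surjective (M := M) hexact_0 hepi_0
  have exact_m := exact_precomp_of_exact_of_surjective (M := M) hexact_m hepi_m
  refine ⟨fun ⟨hX, hY⟩ ↦ ?_, fun ⟨hY, hZ⟩ ↦ ?_⟩
  · exact AddMonoidHom.bijective_of_bijective_of_injective_of_left_exact
      (precomp M g0) (precomp M f0) (precomp M gm) (precomp M fm)
      (precomp M dz) (precomp M dy) (precomp M dx) comm_g comm_f exact_0 exact_m hY hX.1
      (precomp_injective_of_surjective hepi_0) (precomp_injective_of_surjective hepi_m)
  · exact AddMonoidHom.bijective_of_surjective_of_bijective_of_right_exact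
      (precomp M g0) (precomp M f0) (precomp M gm) (precomp M fm)
      (precomp M dz) (precomp M dy) (precomp M dx) comm_g comm_f exact_0 exact_m hZ.2 hY
      (precomp_surjective_of_exact_of_injective hexact_0 hmono_0 hepi_0)
      (precomp_surjective_of_exact_of_injective hexact_m hmono_m hepi_m)
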